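/- Let A be a finite-dimensional central simple algebra over a nonarchimedean local field K and D a maximal order in A. Then the stabilizer of D under the conjugation action of A* is a compact subgroup of A*/K*. -/

import Mathlib

/-- A nonarchimedean local field: a nontrivially normed field whose norm is
nonarchimedean and which is locally compact. -/
class NonarchLocalField (K : Type*) extends NontriviallyNormedField K where
  isNonarchimedean : IsNonarchimedean (norm : K → ℝ)
  locallyCompact : LocallyCompactSpace K

/-- `s` is a full `O`-lattice in the finite-dimensional `K`-algebra (or vector space) `A`:
it is contained in a finitely generated `O`-submodule and spans `A` over `K`. -/
def IsFullLattice (K : Type*) [Field K] {A : Type*} [Ring A] [Algebra K A]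
    (O : Subring K) (s : Set A) : Prop :=
  letI : Algebra O A := ((algebraMap K A).comp O.subtype).toAlgebra' (fun c x => Algebra.commutes (c : K) x)
  (∃ t : Finset A, s ⊆ (Submodule.span O (t : Set A) : Set A)) ∧
    Submodule.span K s = ⊤

/-- An `O`-order of maximal rank in `A`: a subring which is a full `O`-lattice
and is stable under multiplication by `O`. -/
def IsOrder (K : Type*) [Field K] {A : Type*} [Ring A] [Algebra K A]
    (O : Subring K) (D : Subring A) : Prop :=
  IsFullLattice K O (D : Set A) ∧ ∀ c ∈ O, ∀ x ∈ D, algebraMap K A c * x ∈ D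

def IsMaximalOrder (K : Type*) [Field K] {A : Type*} [Ring A] [Algebra K A]
    (O : Subring K) (D : Subring A) : Prop :=
  IsOrder K O D ∧ ∀ D' : Subring A, IsOrder K O D' → D ≤ D' → D = D'

/-! An order `D` is a bounded full lattice containing a neighbourhood of `0`, hence a compact
open subring of `A`, and its stabilizer is closed in `Aˣ`. Fixing `c ∈ K` with `‖c‖ > 1`, every
class of `Aˣ/K*` has a representative `x` with `1 ≤ ‖x‖ ≤ ‖c‖`, and such an `x` lies in the set `T`
of all `y` with `1 ≤ ‖y‖ ≤ ‖c‖` and `D y ⊆ y D`, which is compact because `D` is. For `y ∈ T`,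
`A y ⊆ y A` since `D` spans `A`, so `y A` is a nonzero two-sided ideal of the simple algebra `A`
and `y` is a unit. Thus `T` is a compact set of units, and its preimage in `Aˣ` is compact since
`Aˣ → A` is an open embedding. -/

open Filter Topology Set

section Lattice

variable {K A : Type*}

theorem IsFullLattice.isBounded [NormedField K] [SeminormedRing A] [NormedAlgebra K A]
    {O : Subring K} (hO : ∀ c ∈ O, ‖c‖ ≤ 1) {s : Set A} (hs : IsFullLattice K O s) :
    Bornology.IsBounded s := by
  let : Algebra O A :=
    ((algebraMap K A).comp O.subtype).toAlgebra' (fun c x => Algebra.commutes (c : K) x)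
  obtain ⟨⟨t, ht⟩, -⟩ := hs
  refine (Metric.isBounded_closedBall (x := (0 : A)) (r := ∑ a ∈ t, ‖a‖)).subset fun x hx => ?_
  obtain ⟨f, -, rfl⟩ := Submodule.mem_span_finset.1 (ht hx)
  refine mem_closedBall_zero_iff.2 <| (norm_sum_le _ _).trans <| Finset.sum_le_sum fun a _ => ?_
  change ‖algebraMap K A (f a) * a‖ ≤ ‖a‖
  rw [← Algebra.smul_def, norm_smul]
  exact mul_le_of_le_one_left (norm_nonneg a) (hO _ (f a).2)

variable [NontriviallyNormedField K] [NormedRing A] [NormedAlgebra K A] [FiniteDimensional K A]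
  {O : Subring K} {D : Subring A}

theorem IsOrder.mem_nhds_zero [CompleteSpace K] (hO : ∀ c : K, ‖c‖ ≤ 1 → c ∈ O)
    (hD : IsOrder K O D) : (D : Set A) ∈ 𝓝 0 := by
  obtain ⟨⟨-, hspan⟩, hmul⟩ := hD
  obtain ⟨b, hbD, hbspan, hb⟩ := exists_linearIndependent K (D : Set A)
  let B : Module.Basis b K A := .mk hb (by rw [Subtype.range_coe, hbspan, hspan])
  have : Finite b := Module.Finite.finite_basis B
  have : Fintype b := .ofFinite b
  have hcont : Continuous B.equivFun :=
    LinearMap.continuous_of_finiteDimensional (B.equivFun : A →ₗ[K] b → K)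
  refine mem_of_superset ((hcont.tendsto' 0 0 (map_zero _)) (Metric.ball_mem_nhds 0 one_pos))
    fun x hx => ?_
  rw [← B.sum_equivFun x]
  refine D.sum_mem fun i _ => ?_
  rw [Module.Basis.mk_apply, Algebra.smul_def]
  exact hmul _ (hO _ ((norm_le_pi_norm _ i).trans (mem_ball_zero_iff.1 hx).le)) _ (hbD i.2)

theorem IsOrder.isClopen [CompleteSpace K] (hO : ∀ c : K, ‖c‖ ≤ 1 → c ∈ O)
    (hD : IsOrder K O D) : IsClopen (D : Set A) :=
  have hopen := D.toAddSubgroup.isOpen_of_mem_nhds (hD.mem_nhds_zero hO)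
  ⟨D.toAddSubgroup.isClosed_of_isOpen hopen, hopen⟩

theorem IsOrder.isCompact [ProperSpace K] (hO : ∀ c : K, c ∈ O ↔ ‖c‖ ≤ 1) (hD : IsOrder K O D) :
    IsCompact (D : Set A) :=
  have : ProperSpace A := FiniteDimensional.proper K A
  Metric.isCompact_of_isClosed_isBounded (hD.isClopen fun c => (hO c).2).isClosed
    (hD.1.isBounded fun c => (hO c).1)

end Lattice

theorem IsSimpleRing.isUnit_of_forall_exists_mul_eq_mul {A : Type*} [Ring A] [IsSimpleRing A]
    [IsDedekindFiniteMonoid A] {y : A} (hy : y ≠ 0) (h : ∀ a, ∃ b, a * y = y * b) :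
    IsUnit y := by
  let I : TwoSidedIdeal A := .mk' (range (y * ·)) ⟨0, mul_zero y⟩
    (by rintro _ _ ⟨a, rfl⟩ ⟨b, rfl⟩; exact ⟨a + b, mul_add y a b⟩)
    (by rintro _ ⟨a, rfl⟩; exact ⟨-a, mul_neg y a⟩)
    (by
      rintro x _ ⟨a, rfl⟩
      obtain ⟨b, hb⟩ := h x
      exact ⟨b * a, show y * (b * a) = x * (y * a) by rw [← mul_assoc, ← hb, mul_assoc]⟩)
    (by rintro _ x ⟨a, rfl⟩; exact ⟨a * x, (mul_assoc y a x).symm⟩)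
  have hyI : y ∈ I := (TwoSidedIdeal.mem_mk' ..).2 ⟨1, mul_one y⟩
  obtain ⟨b, hb⟩ := (TwoSidedIdeal.mem_mk' ..).1 (IsSimpleRing.one_mem_of_ne_zero_mem I hy hyI)
  exact .of_mul_eq_one b hb

theorem exists_mul_eq_mul_of_span_eq_top {K A : Type*} [CommSemiring K] [Semiring A]
    [Algebra K A] {s : Set A} (hs : Submodule.span K s = ⊤) {y : A}
    (h : ∀ d ∈ s, ∃ e, d * y = y * e) (a : A) : ∃ b, a * y = y * b := by
  have hs_le : s ⊆ (LinearMap.range (LinearMap.mulLeft K y)).comap (LinearMap.mulRight K y) :=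
    fun d hd => (h d hd).imp fun _ => Eq.symm
  obtain ⟨b, hb⟩ := Submodule.span_le.2 hs_le (hs ▸ Submodule.mem_top : a ∈ Submodule.span K s)
  exact ⟨b, hb.symm⟩

theorem isClosed_setOf_forall_exists_mul_eq_mul {A : Type*} [Mul A] [TopologicalSpace A]
    [ContinuousMul A] [T2Space A] {D : Set A} (hD : IsCompact D) :
    IsClosed {y | ∀ d ∈ D, ∃ e ∈ D, d * y = y * e} := by
  have : CompactSpace D := isCompact_iff_compactSpace.1 hD
  simp only [ofPred_forall]
  refine isClosed_biInter fun d _ => ?_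
  have hproj : {y | ∃ e ∈ D, d * y = y * e} = Prod.fst '' {p : A × D | d * p.1 = p.1 * p.2} := by
    ext y
    exact ⟨fun ⟨e, he, h⟩ => ⟨(y, ⟨e, he⟩), h, rfl⟩, fun ⟨⟨_, e⟩, h, hy⟩ => hy ▸ ⟨e, e.2, h⟩⟩
  rw [hproj]
  exact isClosedMap_fst_of_compactSpace _ (isClosed_eq (by fun_prop) (by fun_prop))

theorem Units.isCompact_preimage_val {R : Type*} [NormedRing R] [HasSummableGeomSeries R]
    {T : Set R} (hT : IsCompact T) (hunit : ∀ y ∈ T, IsUnit y) : IsCompact (Units.val ⁻¹' T) :=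
  Units.isOpenEmbedding_val.isInducing.isCompact_preimage' hT fun y hy => hunit y hy

def conjStabilizer {A : Type*} [Monoid A] (D : Set A) : Set Aˣ :=
  {x | ∀ a, a ∈ D ↔ (x : A) * a * ((x⁻¹ : Aˣ) : A) ∈ D}

section conjStabilizer

variable {A : Type*} [Monoid A] {D : Set A}

theorem exists_mul_eq_mul_of_mem_conjStabilizer {x : Aˣ} (hx : x ∈ conjStabilizer D) :
    ∀ d ∈ D, ∃ e ∈ D, d * x = x * e :=
  fun d hd => ⟨↑x⁻¹ * d * x, (hx _).2 (by simpa [mul_assoc] using hd), by simp [mul_assoc]⟩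

theorem mul_mem_conjStabilizer_of_commute {x u : Aˣ} (hu : ∀ a : A, Commute (u : A) a)
    (hx : x ∈ conjStabilizer D) : x * u ∈ conjStabilizer D := by
  intro a
  have : ((x * u : Aˣ) : A) * a * ((x * u)⁻¹ : Aˣ) = x * a * ↑x⁻¹ := by
    rw [mul_inv_rev, Units.val_mul, Units.val_mul, mul_assoc (x : A) u a, (hu a).eq,
      ← mul_assoc (x : A) a u, mul_assoc _ (u : A), Units.mul_inv_cancel_left]
  rw [this]
  exact hx a

theorem isClosed_conjStabilizer [TopologicalSpace A] [ContinuousMul A] (hD : IsClopen D) :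
    IsClosed (conjStabilizer D) := by
  simp only [conjStabilizer, ofPred_forall]
  refine isClosed_iInter fun a => ?_
  have hconj : Continuous fun x : Aˣ => (x : A) * a * ((x⁻¹ : Aˣ) : A) := by
    have := Units.continuous_val (M := A)
    have := Units.continuous_coe_inv (M := A)
    fun_prop
  by_cases ha : a ∈ D
  · simp only [ha, true_iff]
    exact hD.isClosed.preimage hconj
  · simp only [ha, false_iff]
    exact hD.compl.isClosed.preimage hconj

end conjStabilizer

theorem exists_norm_zpow_smul_mem_Ico {K E : Type*} [NormedDivisionRing K]
    [SeminormedAddCommGroup E] [Module K E] [NormSMulClass K E] {c : K} (hc : 1 < ‖c‖) {x : E}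
    (hx : 0 < ‖x‖) : ∃ n : ℤ, ‖c ^ n • x‖ ∈ Ico 1 ‖c‖ := by
  have hc0 : 0 < ‖c‖ := one_pos.trans hc
  obtain ⟨n, hn1, hn2⟩ := exists_mem_Ico_zpow hx hc
  refine ⟨-n, ?_, ?_⟩ <;> rw [norm_smul, norm_zpow, zpow_neg]
  · rwa [one_le_inv_mul₀ (zpow_pos hc0 n)]
  · rwa [inv_mul_lt_iff₀ (zpow_pos hc0 n), ← zpow_add_one₀ hc0.ne']

theorem image_mk_conjStabilizer_eq {K A : Type*} [NormedField K] [NormedRing A]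
    [NormedAlgebra K A] [Nontrivial A] (D : Set A) {c : K} (hc : 1 < ‖c‖) :
    (QuotientGroup.mk '' conjStabilizer D :
        Set (Aˣ ⧸ (Units.map (algebraMap K A).toMonoidHom).range)) =
      QuotientGroup.mk '' (conjStabilizer D ∩ {x | ‖(x : A)‖ ∈ Icc 1 ‖c‖}) := by
  refine Subset.antisymm ?_ (image_mono inter_subset_left)
  rintro _ ⟨x, hx, rfl⟩
  obtain ⟨n, hn⟩ := exists_norm_zpow_smul_mem_Ico hc (norm_pos_iff.2 x.ne_zero)
  let k : Kˣ := Units.mk0 c (norm_pos_iff.1 (one_pos.trans hc)) ^ n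
  let u : Aˣ := Units.map (algebraMap K A).toMonoidHom k
  have hxu : ((x * u : Aˣ) : A) = c ^ n • (x : A) := by
    change (x : A) * algebraMap K A (k : K) = _
    rw [Algebra.smul_def, ← Algebra.commutes]
    simp [k]
  refine ⟨x * u, ⟨mul_mem_conjStabilizer_of_commute (fun a => Algebra.commutes (k : K) a) hx, ?_⟩,
    QuotientGroup.mk_mul_of_mem x ⟨k, rfl⟩⟩
  change ‖((x * u : Aˣ) : A)‖ ∈ Icc 1 ‖c‖
  rw [hxu]
  exact Ico_subset_Icc_self hn

theorem conjugation_stabilizer_compact_general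
    (K : Type*) [NonarchLocalField K] (O : Subring K) (hO : ∀ x : K, x ∈ O ↔ ‖x‖ ≤ 1)
    (A : Type*) [NormedRing A] [NormedAlgebra K A] [FiniteDimensional K A]
    [IsSimpleRing A]
    (D : Subring A) (hD : IsMaximalOrder K O D) :
    IsCompact (QuotientGroup.mk ''
      {x : Aˣ | ∀ a : A, a ∈ D ↔ (x : A) * a * ((x⁻¹ : Aˣ) : A) ∈ D} :
        Set (Aˣ ⧸ (Units.map (algebraMap K A).toMonoidHom).range)) := by
  have : LocallyCompactSpace K := NonarchLocalField.locallyCompact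
  have : ProperSpace K := .of_locallyCompactSpace K
  have : ProperSpace A := FiniteDimensional.proper K A
  have : IsArtinianRing A := .of_finite K A
  have hDorder : IsOrder K O D := hD.1
  obtain ⟨c, hc⟩ := NormedField.exists_one_lt_norm K
  set T : Set A := {y | ‖y‖ ∈ Icc 1 ‖c‖} ∩ {y | ∀ d ∈ D, ∃ e ∈ D, d * y = y * e}
  have hT : IsCompact T :=
    Metric.isCompact_of_isClosed_isBounded
      ((isClosed_Icc.preimage continuous_norm).inter
        (isClosed_setOf_forall_exists_mul_eq_mul (hDorder.isCompact hO)))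
      ((Metric.isBounded_closedBall (x := (0 : A)) (r := ‖c‖)).subset
        fun y hy => mem_closedBall_zero_iff.2 hy.1.2)
  have hTunit : ∀ y ∈ T, IsUnit y := fun y ⟨hnorm, hy⟩ =>
    IsSimpleRing.isUnit_of_forall_exists_mul_eq_mul (norm_pos_iff.1 (one_pos.trans_le hnorm.1))
      (exists_mul_eq_mul_of_span_eq_top hDorder.1.2 fun d hd => (hy d hd).imp fun _ => And.right)
  change IsCompact (QuotientGroup.mk '' conjStabilizer (D : Set A))
  rw [image_mk_conjStabilizer_eq _ hc]
  refine IsCompact.image ?_ continuous_quot_mk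
  refine (Units.isCompact_preimage_val hT hTunit).of_isClosed_subset
    ((isClosed_conjStabilizer (hDorder.isClopen fun c => (hO c).2)).inter
      (isClosed_Icc.preimage (continuous_norm.comp Units.continuous_val))) ?_
  exact fun x ⟨hx, hnorm⟩ => ⟨hnorm, exists_mul_eq_mul_of_mem_conjStabilizer hx⟩

/-- Let `A` be a finite-dimensional central simple algebra over a nonarchimedean
local field `K`, and `D` a maximal order in `A`. Then the stabilizer of `D` under
the conjugation action of `A*` is a compact subset (subgroup) of `A*/K*`. -/
theorem conjugation_stabilizer_compact
    (K : Type*) [NonarchLocalField K] (O : Subring K) (hO : ∀ x : K, x ∈ O ↔ ‖x‖ ≤ 1)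
    (A : Type*) [NormedRing A] [NormedAlgebra K A] [FiniteDimensional K A]
    [Algebra.IsCentral K A] [IsSimpleRing A]
    (D : Subring A) (hD : IsMaximalOrder K O D) :
    IsCompact (QuotientGroup.mk ''
      {x : Aˣ | ∀ a : A, a ∈ D ↔ (x : A) * a * ((x⁻¹ : Aˣ) : A) ∈ D} :
        Set (Aˣ ⧸ (Units.map (algebraMap K A).toMonoidHom).range)) :=
  conjugation_stabilizer_compact_general K O hO A D hD
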